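/- arXiv:2301.12474 — 7 statements merged into one kernel-verified Lean document; each statement's English description precedes it below -/
import Mathlib

section
/- For x > 0 and 0 < β < 1, (1+x)^{1+β} < 1 + (1+β)x + x^{1+β}. -/
/-!
Let `F t = 1 + p t + t ^ p - (1 + t) ^ p`. Then `F 0 = 0` and
`F' t = p (1 + t ^ (p - 1) - (1 + t) ^ (p - 1))`, which is positive for `t > 0` because
`s ↦ s ^ (p - 1)` is strictly subadditive when `p - 1 < 1`. Hence `F` is strictly increasing.
-/

open Set

namespace Real

/-- `(a + b) ^ p = a (a + b) ^ (p - 1) + b (a + b) ^ (p - 1)`, and `s ↦ s ^ (p - 1)` is strictly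
decreasing. -/
theorem rpow_add_lt_add_rpow_of_lt_one {a b p : ℝ} (ha : 0 < a) (hb : 0 < b) (hp : p < 1) :
    (a + b) ^ p < a ^ p + b ^ p := by
  have hab : 0 < a + b := by linarith
  have hp' : p - 1 < 0 := by linarith
  have ha' : a * (a + b) ^ (p - 1) < a ^ p := by
    calc a * (a + b) ^ (p - 1) < a * a ^ (p - 1) :=
          mul_lt_mul_of_pos_left (rpow_lt_rpow_of_neg ha (by linarith) hp') ha
      _ = a ^ p := by rw [rpow_sub_one ha.ne']; field_simp
  have hb' : b * (a + b) ^ (p - 1) < b ^ p := by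
    calc b * (a + b) ^ (p - 1) < b * b ^ (p - 1) :=
          mul_lt_mul_of_pos_left (rpow_lt_rpow_of_neg hb (by linarith) hp') hb
      _ = b ^ p := by rw [rpow_sub_one hb.ne']; field_simp
  calc (a + b) ^ p = a * (a + b) ^ (p - 1) + b * (a + b) ^ (p - 1) := by
        rw [rpow_sub_one hab.ne']; field_simp
    _ < a ^ p + b ^ p := add_lt_add ha' hb'

theorem hasDerivAt_one_add_rpow {p : ℝ} (hp : 1 ≤ p) (t : ℝ) :
    HasDerivAt (fun t => (1 + t) ^ p) (p * (1 + t) ^ (p - 1)) t := by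
  simpa using ((hasDerivAt_id t).const_add 1).rpow_const (Or.inr hp)

theorem one_add_rpow_lt {x p : ℝ} (hx : 0 < x) (hp1 : 1 ≤ p) (hp2 : p < 2) :
    (1 + x) ^ p < 1 + p * x + x ^ p := by
  set F : ℝ → ℝ := fun t => 1 + p * t + t ^ p - (1 + t) ^ p
  have hF : ∀ t, HasDerivAt F (p * (1 + t ^ (p - 1) - (1 + t) ^ (p - 1))) t := fun t => by
    have := (((hasDerivAt_id t).const_mul p).const_add 1 |>.add
      (hasDerivAt_rpow_const (Or.inr hp1))).sub (hasDerivAt_one_add_rpow hp1 t)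
    exact this.congr_deriv (by ring)
  have hmono : StrictMonoOn F (Ici 0) := by
    refine strictMonoOn_of_hasDerivWithinAt_pos (convex_Ici 0)
      (fun t _ => (hF t).continuousAt.continuousWithinAt) (fun t _ => (hF t).hasDerivWithinAt)
      fun t ht => ?_
    rw [interior_Ici] at ht
    have hsub := rpow_add_lt_add_rpow_of_lt_one one_pos ht (by linarith : p - 1 < 1)
    rw [one_rpow] at hsub
    exact mul_pos (by linarith) (by linarith)
  have hF0 : F 0 = 0 := by simp [F, zero_rpow (by linarith : p ≠ 0)]
  have hFx := hmono self_mem_Ici hx.le hx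
  simp only [hF0, F] at hFx
  linarith

end Real

/-- For `x > 0` and `0 < β < 1`, `(1+x)^{1+β} < 1 + (1+β)x + x^{1+β}`. -/
theorem one_add_rpow_one_add_lt (x β : ℝ) (hx : 0 < x) (hβ0 : 0 < β) (hβ1 : β < 1) :
    (1 + x) ^ (1 + β) < 1 + (1 + β) * x + x ^ (1 + β) :=
  Real.one_add_rpow_lt hx (by linarith) (by linarith)
end

section
/- Define ρ(z) = (z+1)^{1+β} - z^{1+β} - 1 for z ≥ 0 and 0 < β < 1. Then ρ(z) ≤ 2((z+1)^β - 1) for all z ≥ 1. -/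
/-- With `ρ(z) = (z+1)^{1+β} - z^{1+β} - 1` and `0 < β < 1`,
`ρ(z) ≤ 2((z+1)^β - 1)` for `z ≥ 1`. -/
theorem rho_le (β : ℝ) (hβ0 : 0 < β) (hβ1 : β < 1) (z : ℝ) (hz : 1 ≤ z) :
    (z + 1) ^ (1 + β) - z ^ (1 + β) - 1 ≤ 2 * ((z + 1) ^ β - 1) := by
  have hz0 : (0:ℝ) < z := lt_of_lt_of_le one_pos hz
  set a := (z + 1) ^ β with ha
  set b := z ^ β with hbb
  set c := z ^ (β - 1) with hc
  have hcb : z * c = b := by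
    rw [hc, hbb, Real.rpow_sub hz0, Real.rpow_one]
    field_simp
  have hb0 : 0 ≤ b := Real.rpow_nonneg hz0.le _
  have hc0 : 0 ≤ c := Real.rpow_nonneg hz0.le _
  have step1 : a ≤ b + β * c := by
    have h1 : (1 + 1/z) ^ β ≤ 1 + β * (1/z) :=
      rpow_one_add_le_one_add_mul_self (le_trans (by norm_num : (-1:ℝ) ≤ 0) (by positivity)) hβ0.le hβ1.le
    have h2 : a = z ^ β * (1 + 1/z) ^ β := by
      rw [ha, ← Real.mul_rpow hz0.le (by positivity)]
      congr 1
      field_simp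
    rw [h2]
    calc z ^ β * (1 + 1/z) ^ β ≤ z ^ β * (1 + β * (1/z)) :=
          mul_le_mul_of_nonneg_left h1 (Real.rpow_nonneg hz0.le _)
      _ = b + β * c := by
          rw [hbb, hc, Real.rpow_sub hz0, Real.rpow_one]
          field_simp
  have step2 : 1 ≤ (1 - β) * b + β * c := by
    have h := Real.geom_mean_le_arith_mean2_weighted (by linarith : (0:ℝ) ≤ 1 - β)
      hβ0.le hb0 hc0 (by ring)
    have hgm : b ^ (1 - β) * c ^ β = 1 := by
      rw [hbb, hc, ← Real.rpow_mul hz0.le, ← Real.rpow_mul hz0.le,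
        ← Real.rpow_add hz0]
      norm_num [show β * (1 - β) + (β - 1) * β = 0 by ring]
    rw [hgm] at h
    exact h
  have hsplit : (z + 1) ^ (1 + β) = (z + 1) * a := by
    rw [ha, Real.rpow_add (by linarith), Real.rpow_one]
  have hsplit2 : z ^ (1 + β) = z * b := by
    rw [hbb, Real.rpow_add hz0, Real.rpow_one]
  rw [hsplit, hsplit2]
  nlinarith [mul_le_mul_of_nonneg_left step1 (by linarith : (0:ℝ) ≤ z - 1), hcb]
end

section
/- Define ρ(z) = (z+1)^{1+β} - z^{1+β} - 1 for z > 0 and 0 < β < 1. Then ρ(z) < 2(2^β - 1) z^β for all 0 < z < 1. -/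
/-!
The ratio `ρ(z) / z^β` is strictly increasing on `(0, ∞)` and equals `2(2^β - 1)` at `z = 1`.
Its derivative has the sign of `z ρ'(z) - β ρ(z)`, which vanishes at `0` and has derivative
`(1 + β) ((z + 1)^(β - 1) (z + 1 - β) - z^β)`; this is positive by Bernoulli's inequality
`(1 + s)^β < 1 + β s` at `s = -1/(z + 1)`.
-/

open Real Set

theorem rpow_lt_add_one_rpow_sub_one_mul {β y : ℝ} (hβ0 : 0 < β) (hβ1 : β < 1) (hy : 0 ≤ y) :
    y ^ β < (y + 1) ^ (β - 1) * (y + 1 - β) := by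
  have ha : 0 < y + 1 := by linarith
  set s := -(y + 1)⁻¹ with hs_def
  have hs : -1 ≤ s := neg_le_neg (inv_le_one_of_one_le₀ (by linarith))
  have hbern := rpow_one_add_lt_one_add_mul_self hs (neg_ne_zero.2 (inv_ne_zero ha.ne')) hβ0 hβ1
  have hy' : y = (y + 1) * (1 + s) := by rw [hs_def]; field_simp; ring
  calc y ^ β = (y + 1) ^ β * (1 + s) ^ β := by rw [← mul_rpow ha.le (by linarith), ← hy']
    _ < (y + 1) ^ β * (1 + β * s) := by gcongr
    _ = (y + 1) ^ (β - 1) * (y + 1 - β) := by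
      rw [rpow_sub_one ha.ne', hs_def]; field_simp; ring

noncomputable def rho (β z : ℝ) : ℝ := (z + 1) ^ (1 + β) - z ^ (1 + β) - 1

noncomputable def rhoDeriv (β z : ℝ) : ℝ := (1 + β) * ((z + 1) ^ β - z ^ β)

theorem rho_zero {β : ℝ} (hβ : β ≠ -1) : rho β 0 = 0 := by
  have : 1 + β ≠ 0 := fun h => hβ (by linarith)
  simp [rho, zero_rpow this]

theorem rho_one (β : ℝ) : rho β 1 = 2 * (2 ^ β - 1) := by
  rw [rho, one_rpow, one_add_one_eq_two, rpow_add two_pos, rpow_one]; ring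

theorem hasDerivAt_rho {β : ℝ} (hβ : 0 ≤ β) (z : ℝ) : HasDerivAt (rho β) (rhoDeriv β z) z := by
  have hp : 1 ≤ 1 + β := by linarith
  have h₁ := ((hasDerivAt_id' z).add_const 1).rpow_const (Or.inr hp)
  have h₂ := hasDerivAt_rpow_const (x := z) (Or.inr hp)
  exact ((h₁.sub h₂).sub_const 1).congr_deriv (by rw [rhoDeriv, add_sub_cancel_left]; ring)

theorem hasDerivAt_rhoDeriv {β z : ℝ} (hz : 0 < z) :
    HasDerivAt (rhoDeriv β) ((1 + β) * (β * (z + 1) ^ (β - 1) - β * z ^ (β - 1))) z := by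
  have h₁ := ((hasDerivAt_id' z).add_const 1).rpow_const (p := β) (Or.inl (by linarith))
  have h₂ := hasDerivAt_rpow_const (x := z) (p := β) (Or.inl hz.ne')
  exact ((h₁.sub h₂).const_mul (1 + β)).congr_deriv (by ring)

theorem mul_rho_lt_mul_rhoDeriv {β z : ℝ} (hβ0 : 0 < β) (hβ1 : β < 1) (hz : 0 < z) :
    β * rho β z < z * rhoDeriv β z := by
  set ψ : ℝ → ℝ := fun y => y * rhoDeriv β y - β * rho β y with hψ
  have hcont : Continuous ψ := by
    simp only [hψ, rho, rhoDeriv]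
    fun_prop (disch := linarith)
  have hderiv : ∀ y, 0 < y → HasDerivAt ψ
      (rhoDeriv β y + y * ((1 + β) * (β * (y + 1) ^ (β - 1) - β * y ^ (β - 1)))
        - β * rhoDeriv β y) y := fun y hy =>
    (((hasDerivAt_id' y).mul (hasDerivAt_rhoDeriv hy)).sub
      ((hasDerivAt_rho hβ0.le y).const_mul β)).congr_deriv (by ring)
  have hmono : StrictMonoOn ψ (Ici 0) := by
    refine strictMonoOn_of_deriv_pos (convex_Ici 0) hcont.continuousOn fun y hy => ?_
    rw [interior_Ici] at hy
    have hy : 0 < y := hy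
    have e₁ : (y + 1) ^ β = (y + 1) ^ (β - 1) * (y + 1) := by
      rw [← rpow_add_one (by linarith), sub_add_cancel]
    have e₂ : y ^ β = y ^ (β - 1) * y := by
      rw [← rpow_add_one hy.ne', sub_add_cancel]
    rw [(hderiv y hy).deriv]
    calc (0 : ℝ) < (1 + β) * ((y + 1) ^ (β - 1) * (y + 1 - β) - y ^ β) :=
          mul_pos (by linarith) (sub_pos.2 (rpow_lt_add_one_rpow_sub_one_mul hβ0 hβ1 hy.le))
      _ = _ := by rw [rhoDeriv, e₁, e₂]; ring
  simpa [hψ, rho_zero (β := β) (by linarith)] using hmono self_mem_Ici hz.le hz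

theorem strictMonoOn_rho_div_rpow {β : ℝ} (hβ0 : 0 < β) (hβ1 : β < 1) :
    StrictMonoOn (fun z => rho β z / z ^ β) (Ioi 0) := by
  have hderiv : ∀ z, 0 < z → HasDerivAt (fun z => rho β z / z ^ β)
      ((rhoDeriv β z * z ^ β - rho β z * (β * z ^ (β - 1))) / (z ^ β) ^ 2) z :=
    fun z hz => (hasDerivAt_rho hβ0.le z).div (hasDerivAt_rpow_const (Or.inl hz.ne'))
      (rpow_pos_of_pos hz β).ne'
  refine strictMonoOn_of_deriv_pos (convex_Ioi 0)
    (fun z hz => (hderiv z hz).continuousAt.continuousWithinAt) fun z hz => ?_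
  rw [interior_Ioi] at hz
  have hz : 0 < z := hz
  have e : z ^ β = z ^ (β - 1) * z := by rw [← rpow_add_one hz.ne', sub_add_cancel]
  rw [(hderiv z hz).deriv]
  refine div_pos ?_ (by positivity)
  calc (0 : ℝ) < z ^ (β - 1) * (z * rhoDeriv β z - β * rho β z) :=
        mul_pos (rpow_pos_of_pos hz _) (sub_pos.2 (mul_rho_lt_mul_rhoDeriv hβ0 hβ1 hz))
    _ = _ := by rw [e]; ring

/-- With `ρ(z) = (z+1)^{1+β} - z^{1+β} - 1` and `0 < β < 1`,
`ρ(z) < 2(2^β - 1) z^β` for `0 < z < 1`. -/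
theorem rho_lt (β : ℝ) (hβ0 : 0 < β) (hβ1 : β < 1) (z : ℝ) (hz0 : 0 < z) (hz1 : z < 1) :
    (z + 1) ^ (1 + β) - z ^ (1 + β) - 1 < 2 * ((2 : ℝ) ^ β - 1) * z ^ β := by
  have hlt : rho β z / z ^ β < rho β 1 / 1 ^ β :=
    strictMonoOn_rho_div_rpow hβ0 hβ1 hz0 (mem_Ioi.2 one_pos) hz1
  rwa [one_rpow, div_one, rho_one, div_lt_iff₀ (rpow_pos_of_pos hz0 β)] at hlt
end

section
/- Let ρ(z) = (z+1)^{1+β} - z^{1+β} - 1 with 0 < β < 1, and let r_*(y) = ((2^β - 1)ρ(y)/(ρ(2y) - ρ(y)))^{1/(1-β)}. Then r_*(y) < 1 for every y > 0; equivalently, ρ(2y) - ρ(y) > (2^β - 1)ρ(y) for all y > 0. -/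
/-!
Write `p = 1 + β`. By homogeneity `2 ^ p * ρ y = (2y + 2) ^ p - (2y) ^ p - 2 ^ p`, so
`2 ^ β * ρ y < ρ (2y)` says that the second difference `g x = (x + 2) ^ p + x ^ p - 2 (x + 1) ^ p`
satisfies `g (2y) < g 0`. Indeed `g` is strictly decreasing, its derivative being `p` times the
second difference `(x + 2) ^ β + x ^ β - 2 (x + 1) ^ β < 0` of the strictly concave `t ↦ t ^ β`.
Positivity of `ρ y` is strict superadditivity of `t ↦ t ^ p`, and then `r_* y` is a positive
power of a number in `(0, 1)`.
-/

open Real Set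

lemma add_rpow_lt_rpow_add {p a b : ℝ} (hp : 1 < p) (ha : 0 < a) (hb : 0 < b) :
    a ^ p + b ^ p < (a + b) ^ p := by
  have hab : 0 < a + b := add_pos ha hb
  have hfrac (c : ℝ) (hc : 0 < c) (hcab : c < a + b) :
      c ^ p / (a + b) ^ p < c / (a + b) := by
    rw [← div_rpow hc.le hab.le]
    exact rpow_lt_self_of_lt_one (div_pos hc hab) ((div_lt_one hab).2 hcab) hp
  have hsum := add_lt_add (hfrac a ha (by linarith)) (hfrac b hb (by linarith))
  rwa [← add_div, ← add_div, div_self hab.ne', div_lt_one (rpow_pos_of_pos hab p)] at hsum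

lemma rpow_add_rpow_lt_two_mul_rpow_add_one {β x : ℝ} (hβ0 : 0 < β) (hβ1 : β < 1)
    (hx : 0 ≤ x) : x ^ β + (x + 2) ^ β < 2 * (x + 1) ^ β := by
  have h := (strictConcaveOn_rpow hβ0 hβ1).2 (mem_Ici.2 hx)
    (mem_Ici.2 (by linarith : 0 ≤ x + 2)) (by linarith : x ≠ x + 2)
    one_half_pos one_half_pos (add_halves 1)
  have hmid : 1 / 2 * x + 1 / 2 * (x + 2) = x + 1 := by ring
  simp only [smul_eq_mul, hmid] at h
  linarith

lemma hasDerivAt_add_const_rpow {p : ℝ} (hp : 1 ≤ p) (c x : ℝ) :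
    HasDerivAt (fun t : ℝ => (t + c) ^ p) (p * (x + c) ^ (p - 1)) x := by
  simpa using ((hasDerivAt_id x).add_const c).rpow_const (Or.inr hp)

lemma strictAntiOn_second_difference_rpow_one_add {β : ℝ} (hβ0 : 0 < β) (hβ1 : β < 1) :
    StrictAntiOn (fun x : ℝ => (x + 2) ^ (1 + β) + x ^ (1 + β) - 2 * (x + 1) ^ (1 + β))
      (Ici 0) := by
  have hp : (1 : ℝ) ≤ 1 + β := by linarith
  have hderiv : ∀ x : ℝ, HasDerivAt
      (fun x : ℝ => (x + 2) ^ (1 + β) + x ^ (1 + β) - 2 * (x + 1) ^ (1 + β))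
      ((1 + β) * ((x + 2) ^ β + x ^ β - 2 * (x + 1) ^ β)) x := by
    intro x
    have h := ((hasDerivAt_add_const_rpow hp 2 x).add (hasDerivAt_add_const_rpow hp 0 x)).sub
      ((hasDerivAt_add_const_rpow hp 1 x).const_mul 2)
    simp only [add_zero, add_sub_cancel_left] at h
    exact h.congr_deriv (by ring)
  refine strictAntiOn_of_hasDerivWithinAt_neg (convex_Ici 0)
    (fun x _ => (hderiv x).continuousAt.continuousWithinAt)
    (fun x _ => (hderiv x).hasDerivWithinAt) fun x hx => ?_
  rw [interior_Ici] at hx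
  have := rpow_add_rpow_lt_two_mul_rpow_add_one hβ0 hβ1 (le_of_lt hx)
  exact mul_neg_of_pos_of_neg (by linarith) (by linarith)

lemma two_rpow_mul_rho_lt_rho_two_mul {β y : ℝ} (hβ0 : 0 < β) (hβ1 : β < 1) (hy : 0 < y) :
    2 ^ β * ((y + 1) ^ (1 + β) - y ^ (1 + β) - 1)
      < (2 * y + 1) ^ (1 + β) - (2 * y) ^ (1 + β) - 1 := by
  have hp : 1 + β ≠ 0 := by linarith
  have hdec := strictAntiOn_second_difference_rpow_one_add hβ0 hβ1 (mem_Ici.2 le_rfl)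
    (mem_Ici.2 (by linarith : (0 : ℝ) ≤ 2 * y)) (by linarith)
  have hscale : ∀ t : ℝ, 0 ≤ t → (2 * t) ^ (1 + β) = 2 * 2 ^ β * t ^ (1 + β) :=
    fun t ht => by rw [mul_rpow zero_le_two ht, rpow_one_add' zero_le_two hp]
  simp only [zero_add, zero_rpow hp, one_rpow, show 2 * y + 2 = 2 * (y + 1) by ring,
    hscale (y + 1) (by linarith), hscale y hy.le, rpow_one_add' zero_le_two hp] at hdec
  rw [hscale y hy.le]
  linear_combination hdec / 2

/-- With `ρ(z) = (z+1)^{1+β} - z^{1+β} - 1` and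
`r_*(y) = ((2^β - 1)ρ(y)/(ρ(2y) - ρ(y)))^{1/(1-β)}`, one has `r_*(y) < 1` for every
`y > 0`; equivalently, `ρ(2y) - ρ(y) > (2^β - 1)ρ(y)` for all `y > 0`. -/
theorem rstar_lt_one (β : ℝ) (hβ0 : 0 < β) (hβ1 : β < 1)
    (ρ rstar : ℝ → ℝ)
    (hρ : ∀ z : ℝ, ρ z = (z + 1) ^ (1 + β) - z ^ (1 + β) - 1)
    (hr : ∀ y : ℝ,
      rstar y = (((2 : ℝ) ^ β - 1) * ρ y / (ρ (2 * y) - ρ y)) ^ (1 / (1 - β)))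
    (y : ℝ) (hy : 0 < y) :
    rstar y < 1 ∧ ((2 : ℝ) ^ β - 1) * ρ y < ρ (2 * y) - ρ y := by
  have hρy : 0 < ρ y := by
    rw [hρ]
    linarith [add_rpow_lt_rpow_add (by linarith : 1 < 1 + β) hy one_pos, one_rpow (1 + β)]
  have hkey : 2 ^ β * ρ y < ρ (2 * y) := by
    rw [hρ, hρ]
    exact two_rpow_mul_rho_lt_rho_two_mul hβ0 hβ1 hy
  have hineq : (2 ^ β - 1) * ρ y < ρ (2 * y) - ρ y := by linarith
  have hnum : 0 < (2 ^ β - 1) * ρ y := mul_pos (sub_pos.2 (one_lt_rpow one_lt_two hβ0)) hρy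
  have hden : 0 < ρ (2 * y) - ρ y := hnum.trans hineq
  refine ⟨?_, hineq⟩
  rw [hr]
  exact rpow_lt_one (div_pos hnum hden).le ((div_lt_one hden).2 hineq)
    (one_div_pos.2 (sub_pos.2 hβ1))
end

section
/- With the discrete kernels a^{(β,n)}_{n-k} = (1/(τ_n τ_k)) ∫_{t_{n-1}}^{t_n} ∫_{t_{k-1}}^{min(t,t_k)} ω_β(t-s) ds dt for 0 < β < 1, the kernels are strictly decreasing in the off-diagonal index: a^{(β,n)}_1 > a^{(β,n)}_2 > ⋯ > a^{(β,n)}_{n-1} > 0 for n ≥ 2. -/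
/-! Evaluating the double integral in closed form, `a^{(β,n)}_{n-k}` is a fixed positive multiple
of the divided difference of `G(a) = (t_{n-1} - a)^{β+1} - (t_n - a)^{β+1}` over `[t_{k-1}, t_k]`.
Since `1 < β + 1 < 2`, `G` is strictly increasing and strictly convex on `(-∞, t_{n-1}]`, so
these divided differences are positive and increase with `k`. -/

open Real Set intervalIntegral

noncomputable section

def powGap (p c d a : ℝ) : ℝ := (c - a) ^ p - (d - a) ^ p

/-- `discreteKernel β (t (k - 1)) (t k) (t (n - 1)) (t n)` is `a^{(β,n)}_{n-k}`. -/
def discreteKernel (β a b c d : ℝ) : ℝ :=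
  (1 / ((d - c) * (b - a))) *
    ∫ x in c..d, ∫ s in a..(min x b), (x - s) ^ (β - 1) / Gamma β

end

section PowGap

variable {p c d x : ℝ}

lemma continuous_powGap (hp : 0 ≤ p) : Continuous (powGap p c d) :=
  ((continuous_rpow_const hp).comp (continuous_const.sub continuous_id)).sub
    ((continuous_rpow_const hp).comp (continuous_const.sub continuous_id))

lemma hasDerivAt_powGap (hx : x < c) (hcd : c ≤ d) :
    HasDerivAt (powGap p c d) (-p * powGap (p - 1) c d x) x := by
  have hasDerivAt_rpow_sub (e : ℝ) (he : x < e) :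
      HasDerivAt (fun a => (e - a) ^ p) (p * (e - x) ^ (p - 1) * (0 - 1)) x :=
    (hasDerivAt_rpow_const (Or.inl (sub_pos.mpr he).ne')).comp x
      ((hasDerivAt_const x e).sub (hasDerivAt_id x))
  exact ((hasDerivAt_rpow_sub c hx).sub (hasDerivAt_rpow_sub d (hx.trans_le hcd))).congr_deriv
    (by unfold powGap; ring)

lemma powGap_neg (hp : 0 < p) (hx : x < c) (hcd : c < d) : powGap p c d x < 0 :=
  sub_neg.mpr (rpow_lt_rpow (sub_pos.mpr hx).le (by linarith) hp)

lemma powGap_pos (hp : p < 0) (hx : x < c) (hcd : c < d) : 0 < powGap p c d x :=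
  sub_pos.mpr (rpow_lt_rpow_of_neg (sub_pos.mpr hx) (by linarith) hp)

lemma deriv_powGap (hx : x < c) (hcd : c ≤ d) :
    deriv (powGap p c d) x = -p * powGap (p - 1) c d x :=
  (hasDerivAt_powGap hx hcd).deriv

lemma strictMonoOn_powGap (hp : 1 < p) (hcd : c < d) : StrictMonoOn (powGap p c d) (Iic c) := by
  refine strictMonoOn_of_deriv_pos (convex_Iic c) (continuous_powGap (by linarith)).continuousOn
    fun x hx => ?_
  rw [interior_Iic] at hx
  rw [deriv_powGap hx hcd.le]
  nlinarith [powGap_neg (sub_pos.mpr hp) hx hcd]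

lemma strictAntiOn_powGap (hp0 : 0 < p) (hp1 : p < 1) (hcd : c < d) :
    StrictAntiOn (powGap p c d) (Iic c) := by
  refine strictAntiOn_of_deriv_neg (convex_Iic c) (continuous_powGap hp0.le).continuousOn
    fun x hx => ?_
  rw [interior_Iic] at hx
  rw [deriv_powGap hx hcd.le]
  nlinarith [powGap_pos (sub_neg.mpr hp1) hx hcd]

lemma strictConvexOn_powGap (hp1 : 1 < p) (hp2 : p < 2) (hcd : c < d) :
    StrictConvexOn ℝ (Iic c) (powGap p c d) := by
  refine StrictMonoOn.strictConvexOn_of_deriv (convex_Iic c)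
    (continuous_powGap (by linarith)).continuousOn ?_
  rw [interior_Iic]
  have hanti := (strictAntiOn_powGap (p := p - 1) (by linarith) (by linarith) hcd).mono
    Iio_subset_Iic_self
  intro x hx y hy hxy
  rw [deriv_powGap hx hcd.le, deriv_powGap hy hcd.le]
  nlinarith [hanti hx hy hxy]

end PowGap

section DiscreteKernel

variable {β a b c d : ℝ}

lemma integral_rpow_sub_div_Gamma (hβ : 0 < β) (a b x : ℝ) :
    ∫ s in a..b, (x - s) ^ (β - 1) / Gamma β =
      ((x - a) ^ β - (x - b) ^ β) / (β * Gamma β) := by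
  rw [intervalIntegral.integral_div, integral_comp_sub_left (fun u => u ^ (β - 1)) x,
    integral_rpow (Or.inl (by linarith)), sub_add_cancel, div_div]

lemma integral_integral_min_eq_powGap (hβ : 0 < β) (hbc : b ≤ c) (hcd : c ≤ d) :
    ∫ x in c..d, ∫ s in a..(min x b), (x - s) ^ (β - 1) / Gamma β =
      (powGap (β + 1) c d b - powGap (β + 1) c d a) / (β * (β + 1) * Gamma β) := by
  have hinner : EqOn (fun x => ∫ s in a..(min x b), (x - s) ^ (β - 1) / Gamma β)
      (fun x => ((x - a) ^ β - (x - b) ^ β) / (β * Gamma β)) (uIcc c d) := by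
    intro x hx
    rw [uIcc_of_le hcd] at hx
    simp only [min_eq_right (hbc.trans hx.1), integral_rpow_sub_div_Gamma hβ]
  have hcont (e : ℝ) : Continuous fun x : ℝ => (x - e) ^ β :=
    (continuous_rpow_const hβ.le).comp (continuous_id.sub continuous_const)
  have houter (e : ℝ) :
      ∫ x in c..d, (x - e) ^ β = ((d - e) ^ (β + 1) - (c - e) ^ (β + 1)) / (β + 1) := by
    rw [integral_comp_sub_right (fun u => u ^ β) e, integral_rpow (Or.inl (by linarith))]
  rw [integral_congr hinner, intervalIntegral.integral_div,
    integral_sub ((hcont a).intervalIntegrable c d) ((hcont b).intervalIntegrable c d),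
    houter, houter]
  have := Gamma_pos_of_pos hβ
  simp only [powGap]
  field_simp
  ring

lemma discreteKernel_eq_slope (hβ : 0 < β) (hbc : b ≤ c) (hcd : c < d) :
    discreteKernel β a b c d =
      slope (powGap (β + 1) c d) a b / ((d - c) * (β * (β + 1) * Gamma β)) := by
  rw [discreteKernel, integral_integral_min_eq_powGap hβ hbc hcd.le, slope_def_field]
  field_simp

lemma discreteKernel_pos (hβ : 0 < β) (hab : a < b) (hbc : b ≤ c) (hcd : c < d) :
    0 < discreteKernel β a b c d := by
  rw [discreteKernel_eq_slope hβ hbc hcd]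
  have := Gamma_pos_of_pos hβ
  have := (strictMonoOn_powGap (p := β + 1) (by linarith) hcd).slope_pos
    (hab.le.trans hbc) hbc hab.ne
  have := sub_pos.mpr hcd
  positivity

lemma discreteKernel_lt_adjacent (hβ0 : 0 < β) (hβ1 : β < 1) {e : ℝ} (hab : a < b)
    (hbe : b < e) (hec : e ≤ c) (hcd : c < d) :
    discreteKernel β a b c d < discreteKernel β b e c d := by
  rw [discreteKernel_eq_slope hβ0 (hbe.le.trans hec) hcd, discreteKernel_eq_slope hβ0 hec hcd,
    slope_def_field, slope_def_field]
  have := Gamma_pos_of_pos hβ0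
  have := sub_pos.mpr hcd
  gcongr ?_ / _
  exact (strictConvexOn_powGap (p := β + 1) (by linarith) (by linarith)
    hcd).slope_strict_mono_adjacent ((hab.trans hbe).le.trans hec) hec hab hbe

end DiscreteKernel

theorem kernels_strictly_decreasing_general (β : ℝ) (hβ0 : 0 < β) (hβ1 : β < 1)
    (t : ℕ → ℝ) (hmono : ∀ k : ℕ, t k < t (k + 1))
    (n : ℕ) (hn : 2 ≤ n) (A : ℕ → ℝ)
    (hA : ∀ k : ℕ, 1 ≤ k → k ≤ n - 1 →
      A (n - k) = (1 / ((t n - t (n - 1)) * (t k - t (k - 1)))) *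
        ∫ x in (t (n - 1))..(t n), ∫ s in (t (k - 1))..(min x (t k)),
          (x - s) ^ (β - 1) / Real.Gamma β) :
    (∀ j : ℕ, 1 ≤ j → j ≤ n - 2 → A (j + 1) < A j) ∧ 0 < A (n - 1) := by
  have ht : StrictMono t := strictMono_nat_of_lt_succ hmono
  have hA' (k : ℕ) (hk1 : 1 ≤ k) (hkn : k ≤ n - 1) :
      A (n - k) = discreteKernel β (t (k - 1)) (t k) (t (n - 1)) (t n) :=
    hA k hk1 hkn
  have hlast : t (n - 1) < t n := ht (by omega)
  refine ⟨fun j hj1 hj2 => ?_, ?_⟩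
  · obtain ⟨k, rfl⟩ : ∃ k, n = j + k + 2 := ⟨n - j - 2, by omega⟩
    have hAj := hA' (k + 2) (by omega) (by omega)
    have hAj_succ := hA' (k + 1) (by omega) (by omega)
    rw [show j + k + 2 - (k + 2) = j by omega] at hAj
    rw [show j + k + 2 - (k + 1) = j + 1 by omega] at hAj_succ
    rw [hAj, hAj_succ]
    exact discreteKernel_lt_adjacent hβ0 hβ1 (ht (by omega)) (ht (by omega))
      (ht.monotone (by omega)) hlast
  · rw [hA' 1 le_rfl (by omega)]
    exact discreteKernel_pos hβ0 (ht (by omega)) (ht.monotone (by omega)) hlast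

/-- The discrete kernels
`a^{(β,n)}_{n-k} = (1/(τ_n τ_k)) ∫_{t_{n-1}}^{t_n} ∫_{t_{k-1}}^{min(t,t_k)} ω_β(t-s) ds dt`
are strictly decreasing in the off-diagonal index:
`a^{(β,n)}_1 > a^{(β,n)}_2 > ⋯ > a^{(β,n)}_{n-1} > 0` for `n ≥ 2`. -/
theorem kernels_strictly_decreasing (β : ℝ) (hβ0 : 0 < β) (hβ1 : β < 1)
    (t : ℕ → ℝ) (ht0 : t 0 = 0) (hmono : ∀ k : ℕ, t k < t (k + 1))
    (n : ℕ) (hn : 2 ≤ n) (A : ℕ → ℝ)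
    (hA : ∀ k : ℕ, 1 ≤ k → k ≤ n - 1 →
      A (n - k) = (1 / ((t n - t (n - 1)) * (t k - t (k - 1)))) *
        ∫ x in (t (n - 1))..(t n), ∫ s in (t (k - 1))..(min x (t k)),
          (x - s) ^ (β - 1) / Real.Gamma β) :
    (∀ j : ℕ, 1 ≤ j → j ≤ n - 2 → A (j + 1) < A j) ∧ 0 < A (n - 1) :=
  kernels_strictly_decreasing_general β hβ0 hβ1 t hmono n hn A hA
end

section
/- For the discrete kernels a^{(β,n)}_{n-k} defined from ω_β(t) = t^{β-1}/Γ(β) on a variable grid, one has (1+β) a^{(β,n)}_0 > a^{(β,n)}_1 for all n ≥ 2, where a^{(β,n)}_0 = τ_n^{β-1}/Γ(2+β) and a^{(β,n)}_1 = (r_n/(Γ(2+β) τ_n^{1-β})) ((1+1/r_n)^{1+β} - 1/r_n^{1+β} - 1) with r_n = τ_n/τ_{n-1}. -/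
/-!
Put `s = 1 / r`. After clearing the positive factor `r / (Γ(2+β) τ^(1-β))`, the claim becomes
`(1 + s)^(1+β) < 1 + (1+β) s + s^(1+β)`. Both sides agree at `s = 0`, and the derivative of their
difference is `(1+β) (1 + s^β - (1+s)^β)`, which is positive by strict subadditivity of `t ↦ t^β`.
-/

open Real Set

lemma Real.rpow_add_lt_add_rpow {a b q : ℝ} (ha : 0 < a) (hb : 0 < b) (hq : q < 1) :
    (a + b) ^ q < a ^ q + b ^ q := by
  have hc : 0 < a + b := by positivity
  have hsplit : a / (a + b) + b / (a + b) = 1 := by field_simp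
  have hfrac_lt_rpow : ∀ {x : ℝ}, 0 < x → x < a + b → x / (a + b) < (x / (a + b)) ^ q :=
    fun hx hxc ↦ self_lt_rpow_of_lt_one (by positivity) ((div_lt_one hc).2 hxc) hq
  calc (a + b) ^ q = (a + b) ^ q * (a / (a + b) + b / (a + b)) := by rw [hsplit, mul_one]
    _ < (a + b) ^ q * ((a / (a + b)) ^ q + (b / (a + b)) ^ q) := by
        gcongr (a + b) ^ q * ?_
        exact add_lt_add (hfrac_lt_rpow ha (by linarith)) (hfrac_lt_rpow hb (by linarith))
    _ = a ^ q + b ^ q := by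
        rw [div_rpow ha.le hc.le, div_rpow hb.le hc.le]
        field_simp

lemma Real.one_add_rpow_lt_s10 {p s : ℝ} (hp₀ : 0 < p) (hp₂ : p < 2) (hs : 0 < s) :
    (1 + s) ^ p < 1 + p * s + s ^ p := by
  set f : ℝ → ℝ := fun x ↦ 1 + p * x + x ^ p - (1 + x) ^ p
  have hf_cont : Continuous f := by fun_prop (disch := positivity)
  have hf_deriv : ∀ x, 0 < x →
      HasDerivAt f (p * (1 + x ^ (p - 1) - (1 + x) ^ (p - 1))) x := by
    intro x hx
    have hpow := hasDerivAt_rpow_const (p := p) (Or.inl hx.ne')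
    have hshift := (hasDerivAt_rpow_const (p := p) (Or.inl (by positivity : 1 + x ≠ 0))).comp x
      ((hasDerivAt_id x).const_add 1)
    exact (((((hasDerivAt_id x).const_mul p).const_add 1).add hpow).sub hshift).congr_deriv
      (by ring)
  have hf_mono : StrictMonoOn f (Ici 0) := by
    refine strictMonoOn_of_hasDerivWithinAt_pos (convex_Ici 0) hf_cont.continuousOn
      (fun x hx ↦ (hf_deriv x ?_).hasDerivWithinAt) fun x hx ↦ ?_
    · simpa using hx
    · rw [interior_Ici, mem_Ioi] at hx
      have := rpow_add_lt_add_rpow one_pos hx (by linarith : p - 1 < 1)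
      rw [one_rpow] at this
      nlinarith
  have := hf_mono self_mem_Ici hs.le hs
  simp only [f, mul_zero, add_zero, zero_rpow hp₀.ne', one_rpow, sub_self] at this
  linarith

/-- For the discrete kernels with `a^{(β,n)}_0 = τ_n^{β-1}/Γ(2+β)` and
`a^{(β,n)}_1 = (r_n/(Γ(2+β) τ_n^{1-β}))((1+1/r_n)^{1+β} - 1/r_n^{1+β} - 1)`,
one has `(1+β) a^{(β,n)}_0 > a^{(β,n)}_1`. -/
theorem first_kernel_dominance (β τ r : ℝ) (hβ0 : 0 < β) (hβ1 : β < 1)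
    (hτ : 0 < τ) (hr : 0 < r) :
    (r / (Real.Gamma (2 + β) * τ ^ (1 - β))) *
        ((1 + 1 / r) ^ (1 + β) - 1 / r ^ (1 + β) - 1)
      < (1 + β) * (τ ^ (β - 1) / Real.Gamma (2 + β)) := by
  have hΓ : 0 < Gamma (2 + β) := Gamma_pos_of_pos (by linarith)
  have hbracket : (1 + 1 / r) ^ (1 + β) - 1 / r ^ (1 + β) - 1 < (1 + β) * (1 / r) := by
    have := one_add_rpow_lt_s10 (p := 1 + β) (by linarith) (by linarith) (one_div_pos.2 hr)
    rw [div_rpow zero_le_one hr.le, one_rpow] at this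
    linarith
  calc (r / (Gamma (2 + β) * τ ^ (1 - β))) * ((1 + 1 / r) ^ (1 + β) - 1 / r ^ (1 + β) - 1)
      < (r / (Gamma (2 + β) * τ ^ (1 - β))) * ((1 + β) * (1 / r)) := by gcongr
    _ = (1 + β) * (τ ^ (β - 1) / Gamma (2 + β)) := by
        rw [show β - 1 = -(1 - β) by ring, rpow_neg hτ.le]
        field_simp
end

section
/- Let a^{(n)}_{n-k} be discrete kernels with mutually inverse DOC kernels θ^{(n)}_{n-k}, and define the DCC kernels p^{(n)}_{n-k} = Σ_{j=k}^{n} θ^{(j)}_{j-k} for 1 ≤ k ≤ n. Then Σ_{j=k}^{n} p^{(n)}_{n-j} a^{(j)}_{j-k} = 1 for all 1 ≤ k ≤ n. -/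
open Finset

/-- Both sides sum `f i j` over the triangle `k ≤ j ≤ i ≤ n`. -/
theorem sum_Icc_sum_Icc_triangle_comm {M : Type*} [AddCommMonoid M] (f : ℕ → ℕ → M)
    (k n : ℕ) :
    ∑ j ∈ Icc k n, ∑ i ∈ Icc j n, f i j = ∑ i ∈ Icc k n, ∑ j ∈ Icc k i, f i j :=
  sum_comm' fun j i => by simp only [mem_Icc]; omega

/-- After exchanging the order of summation the inner sums are the DOC relations
`∑_{j=k}^{i} θ^{(i)}_{i-j} a^{(j)}_{j-k} = δ_{ik}`, of which only `i = k` survives. -/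
theorem sum_Icc_sum_doc_mul_eq_one {R : Type*} [NonAssocSemiring R] (a θ : ℕ → ℕ → R)
    {k n : ℕ} (hkn : k ≤ n)
    (hθ : ∀ i ∈ Icc k n, ∑ j ∈ Icc k i, θ i (i - j) * a j (j - k) = if i = k then 1 else 0) :
    ∑ j ∈ Icc k n, (∑ i ∈ Icc j n, θ i (i - j)) * a j (j - k) = 1 := by
  simp_rw [sum_mul]
  rw [sum_Icc_sum_Icc_triangle_comm (fun i j => θ i (i - j) * a j (j - k)),
    sum_congr rfl hθ, sum_ite_eq' (Icc k n) k]
  simp [hkn]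

theorem DCC_complementary_general (a θ p : ℕ → ℕ → ℝ)
    (hθ1 : ∀ n k : ℕ, 1 ≤ k → k ≤ n →
      ∑ j ∈ Finset.Icc k n, θ n (n - j) * a j (j - k) = if n = k then 1 else 0)
    (hp : ∀ n k : ℕ, 1 ≤ k → k ≤ n →
      p n (n - k) = ∑ j ∈ Finset.Icc k n, θ j (j - k))
    (n k : ℕ) (hk : 1 ≤ k) (hkn : k ≤ n) :
    ∑ j ∈ Finset.Icc k n, p n (n - j) * a j (j - k) = 1 := by
  have hp_Icc : ∀ j ∈ Icc k n, p n (n - j) = ∑ i ∈ Icc j n, θ i (i - j) := fun j hj =>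
    hp n j (hk.trans (mem_Icc.1 hj).1) (mem_Icc.1 hj).2
  rw [sum_congr rfl fun j hj => by rw [hp_Icc j hj]]
  exact sum_Icc_sum_doc_mul_eq_one a θ hkn fun i hi => hθ1 i k hk (mem_Icc.1 hi).1

/-- The DCC kernels `p^{(n)}_{n-k} = Σ_{j=k}^{n} θ^{(j)}_{j-k}` are complementary to the
kernels `a^{(n)}_{n-k}`: `Σ_{j=k}^{n} p^{(n)}_{n-j} a^{(j)}_{j-k} = 1`. -/
theorem DCC_complementary (a θ p : ℕ → ℕ → ℝ)
    (ha : ∀ n : ℕ, 1 ≤ n → a n 0 ≠ 0)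
    (hθ1 : ∀ n k : ℕ, 1 ≤ k → k ≤ n →
      ∑ j ∈ Finset.Icc k n, θ n (n - j) * a j (j - k) = if n = k then 1 else 0)
    (hp : ∀ n k : ℕ, 1 ≤ k → k ≤ n →
      p n (n - k) = ∑ j ∈ Finset.Icc k n, θ j (j - k))
    (n k : ℕ) (hk : 1 ≤ k) (hkn : k ≤ n) :
    ∑ j ∈ Finset.Icc k n, p n (n - j) * a j (j - k) = 1 :=
  DCC_complementary_general a θ p hθ1 hp n k hk hkn
end
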